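/- (Lemma B) Let n ≥ 2 and let W_1, …, W_n be subsets of M satisfying condition (SD). For any i ∈ {1,…,n−1}, (W_{i+1} \ W_i) ∩ (W_1 ∪ ⋯ ∪ W_i) = ∅. -/

import Mathlib

/-- A possible world over the propositional variables `P`. -/
abbrev World (P : Type) := P → Bool

/-- `minSet S le` is the set of `le`-minimal elements of `S`. -/
def minSet {P : Type} (S : Set (World P)) (le : World P → World P → Prop) :
    Set (World P) :=
  {r | r ∈ S ∧ ∀ r' ∈ S, le r r'}

/-- A total preorder: reflexive, transitive and total. -/
def TotalPreorder {P : Type} (le : World P → World P → Prop) : Prop :=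
  Reflexive le ∧ Transitive le ∧ ∀ r r', le r r' ∨ le r' r

/-- `le` is faithful to `W` iff the `le`-minimal worlds are exactly `W`. -/
def Faithful {P : Type} (le : World P → World P → Prop) (W : Set (World P)) : Prop :=
  minSet Set.univ le = W

/-- The strict part of a preorder. -/
def strictPart {P : Type} (le : World P → World P → Prop) (r r' : World P) : Prop :=
  le r r' ∧ ¬ le r' r

/-- The full-meet preorder of a belief set `W`. -/
def fullMeet {P : Type} (W : Set (World P)) : World P → World P → Prop :=
  fun r r' => r ∈ W ∨ r' ∉ W

/-- Type-B distance: the symmetric difference of the model sets. -/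
def distB {P : Type} (W1 W2 : Set (World P)) : Set (World P) :=
  (W1 \ W2) ∪ (W2 \ W1)

/-- Condition (SD) on a sequence of belief sets. -/
def SD {P : Type} {n : ℕ} (W : Fin n → Set (World P)) : Prop :=
  ∀ i j m : Fin n, i < j → j < m → distB (W j) (W m) ⊆ distB (W i) (W m)

/-- Lexicographic revision of the preorder `le` by the (nonempty) input `A`. -/
def lexRev {P : Type} (le : World P → World P → Prop) (A : Set (World P)) :
    World P → World P → Prop :=
  fun r r' => (r ∈ A ∧ r' ∉ A) ∨ ((r ∈ A ↔ r' ∈ A) ∧ le r r')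

/-- `le''` is the moderate contraction of `le` (faithful to `R`) by `B`:
conditions (C1), (C2), (MC) and faithfulness to `R ∪ min(M\B, le)`. -/
def IsModCon {P : Type} (le : World P → World P → Prop) (R B : Set (World P))
    (le'' : World P → World P → Prop) : Prop :=
  TotalPreorder le'' ∧
  (∀ r r', r ∈ B → r' ∈ B → (le'' r r' ↔ le r r')) ∧
  (∀ r r', r ∉ B → r' ∉ B → (le'' r r' ↔ le r r')) ∧
  (∀ r r', r ∉ B → r' ∈ B → r' ∉ R ∪ minSet Bᶜ le → strictPart le'' r r') ∧
  minSet Set.univ le'' = R ∪ minSet Bᶜ le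

theorem disjoint_diff_of_distB_subset {P : Type} {A B C : Set (World P)}
    (h : distB B C ⊆ distB A C) : Disjoint (C \ B) A :=
  Set.disjoint_left.2 fun _ hx hA =>
    (h (Or.inr hx)).elim (fun hAC => hAC.2 hx.1) (fun hCA => hCA.2 hA)

theorem statement4 {P : Type} {n : ℕ}
    (W : Fin n → Set (World P)) (hSD : SD W)
    (i : ℕ) (hi : i + 1 < n) :
    (W ⟨i + 1, hi⟩ \ W ⟨i, by omega⟩) ∩
      (⋃ (j : Fin n) (_ : (j : ℕ) ≤ i), W j) = ∅ := by
  rw [← Set.disjoint_iff_inter_eq_empty, Set.disjoint_iUnion₂_right]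
  intro j hj
  rcases hj.lt_or_eq with hlt | rfl
  · exact disjoint_diff_of_distB_subset
      (hSD j ⟨i, by omega⟩ ⟨i + 1, hi⟩ (Fin.mk_lt_mk.2 hlt) (Fin.mk_lt_mk.2 i.lt_succ_self))
  · exact Set.disjoint_sdiff_left
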